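/- arXiv:2110.04799 — 4 statements merged into one kernel-verified Lean document; each statement's English description precedes it below -/
import Mathlib

section
/- For every positive integer n, 16·T(5,21,35;n) = N(5,21,35;4(8n+61)) − N(5,21,35;8n+61). -/
/-- Number of representations of `n` as `a*x^2 + b*y^2 + c*z^2` with `x,y,z : ℤ`. -/
noncomputable def N (a b c n : ℕ) : ℕ :=
  Nat.card {p : ℤ × ℤ × ℤ //
    (a : ℤ) * p.1 ^ 2 + (b : ℤ) * p.2.1 ^ 2 + (c : ℤ) * p.2.2 ^ 2 = (n : ℤ)}

/-- Number of representations of `n` as `a*x(x+1)/2 + b*y(y+1)/2 + c*z(z+1)/2` with `x,y,z : ℕ`. -/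
noncomputable def T (a b c n : ℕ) : ℕ :=
  Nat.card {p : ℕ × ℕ × ℕ //
    a * (p.1 * (p.1 + 1) / 2) + b * (p.2.1 * (p.2.1 + 1) / 2)
      + c * (p.2.2 * (p.2.2 + 1) / 2) = n}

namespace Stmt7Aux

lemma sq_odd (t : ℤ) (h : t % 2 = 1) : ∃ k, t^2 = 8*k+1 := by
  obtain ⟨s, rfl⟩ : ∃ s, t = 2*s+1 := ⟨(t-1)/2, by omega⟩
  obtain ⟨r, hr⟩ := Int.even_mul_succ_self s
  exact ⟨r, by rw [show (2*s+1)^2 = 4*(s*(s+1))+1 from by ring, hr]; ring⟩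

lemma sq_four (t : ℤ) (h : t % 4 = 0) : ∃ k, t^2 = 16*k := by
  obtain ⟨s, rfl⟩ : ∃ s, t = 4*s := ⟨t/4, by omega⟩
  exact ⟨s^2, by ring⟩

lemma sq_even (t : ℤ) (h : t % 2 = 0) : ∃ k, t^2 = 4*k := by
  obtain ⟨s, rfl⟩ : ∃ s, t = 2*s := ⟨t/2, by omega⟩
  exact ⟨s^2, by ring⟩

lemma sq_emod32 (x : ℤ) : x^2 % 32 = (x % 16)^2 % 32 := by
  have h1 : x^2 % 32 = (x % 32)^2 % 32 := by rw [pow_two, pow_two, Int.mul_emod]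
  have h2 : x % 16 = x % 32 ∨ x % 16 = x % 32 - 16 := by omega
  rcases h2 with h|h <;> rw [h1, h]
  have e : (x % 32 - 16)^2 = (x % 32)^2 + 32*(8 - (x % 32)) := by ring
  rw [e, Int.add_mul_emod_self_left]

/- ### 2-adic branching claims -/

lemma claimA (x z : ℤ) (hx : x % 2 = 1) (hz : z % 2 = 1) (h : (32:ℤ) ∣ x^2 + 7*z^2) :
    ((x+3*z) % 8 = 0 ∧ (x+3*z) % 16 = 8 ∧ (-3*x+7*z) % 16 = 8 ∧ (z-x) % 8 = 4) ∨
    ((x+3*z) % 8 ≠ 0 ∧ (x-3*z) % 16 = 8 ∧ (-3*x-7*z) % 16 = 8 ∧ (x+5*z) % 16 = 0) := by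
  have e1 := sq_emod32 x
  have e2 := sq_emod32 z
  obtain ⟨k, hk⟩ := h
  have hr : x % 16 = 1 ∨ x % 16 = 3 ∨ x % 16 = 5 ∨ x % 16 = 7 ∨ x % 16 = 9 ∨
      x % 16 = 11 ∨ x % 16 = 13 ∨ x % 16 = 15 := by omega
  have hs : z % 16 = 1 ∨ z % 16 = 3 ∨ z % 16 = 5 ∨ z % 16 = 7 ∨ z % 16 = 9 ∨
      z % 16 = 11 ∨ z % 16 = 13 ∨ z % 16 = 15 := by omega
  have key : ((x % 16)^2 + 7*((z % 16)^2)) % 32 = 0 := by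
    have h0 : (x^2 + 7*z^2) % 32 = 0 := by omega
    have m1 : (x^2 + 7*z^2) % 32 = ((x%16)^2 + 7*((z%16)^2)) % 32 := by
      conv_lhs => rw [Int.add_emod, e1, Int.mul_emod, e2, ← Int.mul_emod, ← Int.add_emod]
    omega
  clear e1 e2 hk
  rcases hr with hr|hr|hr|hr|hr|hr|hr|hr <;> rcases hs with hs|hs|hs|hs|hs|hs|hs|hs <;>
    rw [hr, hs] at key <;> norm_num at key <;> omega

lemma claimB (y z : ℤ) (hy : y % 2 = 1) (hz : z % 2 = 1) (h : (32:ℤ) ∣ 3*y^2 + 5*z^2) :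
    ((y+5*z) % 8 = 0 ∧ (y+5*z) % 16 = 8 ∧ (z-3*y) % 16 = 8 ∧ (y+z) % 8 = 4) ∨
    ((y+5*z) % 8 ≠ 0 ∧ (y-5*z) % 16 = 8 ∧ (3*y+z) % 16 = 8 ∧ (y+3*z) % 16 = 0) := by
  have e1 := sq_emod32 y
  have e2 := sq_emod32 z
  obtain ⟨k, hk⟩ := h
  have hr : y % 16 = 1 ∨ y % 16 = 3 ∨ y % 16 = 5 ∨ y % 16 = 7 ∨ y % 16 = 9 ∨
      y % 16 = 11 ∨ y % 16 = 13 ∨ y % 16 = 15 := by omega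
  have hs : z % 16 = 1 ∨ z % 16 = 3 ∨ z % 16 = 5 ∨ z % 16 = 7 ∨ z % 16 = 9 ∨
      z % 16 = 11 ∨ z % 16 = 13 ∨ z % 16 = 15 := by omega
  have key : (3*((y % 16)^2) + 5*((z % 16)^2)) % 32 = 0 := by
    have h0 : (3*y^2 + 5*z^2) % 32 = 0 := by omega
    have m1 : (3*y^2 + 5*z^2) % 32 = (3*((y%16)^2) + 5*((z%16)^2)) % 32 := by
      conv_lhs => rw [Int.add_emod, Int.mul_emod 3, e1, Int.mul_emod 5, e2,
        ← Int.mul_emod 5, ← Int.mul_emod 3, ← Int.add_emod]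
    omega
  clear e1 e2 hk
  rcases hr with hr|hr|hr|hr|hr|hr|hr|hr <;> rcases hs with hs|hs|hs|hs|hs|hs|hs|hs <;>
    rw [hr, hs] at key <;> norm_num at key <;> omega

/- ### Solution sets -/

def Qset (K : ℤ) : Set (ℤ × ℤ × ℤ) := {p | 5*p.1^2 + 21*p.2.1^2 + 35*p.2.2^2 = K}

def ESet (m : ℤ) : Set (ℤ × ℤ × ℤ) :=
  {p ∈ Qset (4*m) | p.1 % 2 = 0 ∧ p.2.1 % 2 = 0 ∧ p.2.2 % 2 = 0}
def ASet (m : ℤ) : Set (ℤ × ℤ × ℤ) :=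
  {p ∈ Qset (4*m) | p.1 % 2 = 1 ∧ p.2.1 % 4 = 2 ∧ p.2.2 % 2 = 1}
def BSet (m : ℤ) : Set (ℤ × ℤ × ℤ) :=
  {p ∈ Qset (4*m) | p.1 % 4 = 2 ∧ p.2.1 % 2 = 1 ∧ p.2.2 % 2 = 1}
def OSet (m : ℤ) : Set (ℤ × ℤ × ℤ) :=
  {p ∈ Qset m | p.1 % 2 = 1 ∧ p.2.1 % 2 = 1 ∧ p.2.2 % 2 = 1}

lemma Qset_finite (K : ℤ) : (Qset K).Finite := by
  apply Set.Finite.subset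
    (((Set.finite_Icc (-K-1) (K+1)).prod
      ((Set.finite_Icc (-K-1) (K+1)).prod (Set.finite_Icc (-K-1) (K+1)))))
  rintro ⟨x, y, z⟩ h
  have hm : 5*x^2 + 21*y^2 + 35*z^2 = K := h
  have h1 : x^2 ≤ K := by nlinarith [sq_nonneg x, sq_nonneg y, sq_nonneg z]
  have h2 : y^2 ≤ K := by nlinarith [sq_nonneg x, sq_nonneg y, sq_nonneg z]
  have h3 : z^2 ≤ K := by nlinarith [sq_nonneg x, sq_nonneg y, sq_nonneg z]
  refine ⟨?_, ?_, ?_⟩ <;> simp only [Set.mem_Icc] <;> constructor <;>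
    nlinarith [sq_nonneg (x-1), sq_nonneg (x+1), sq_nonneg (y-1), sq_nonneg (y+1),
      sq_nonneg (z-1), sq_nonneg (z+1)]

/- ### Partition -/

lemma partition (m : ℤ) (hm : m % 8 = 5) : Qset (4*m) = ESet m ∪ ASet m ∪ BSet m := by
  apply Set.Subset.antisymm
  · rintro ⟨x, y, z⟩ hmem
    have heq : 5*x^2 + 21*y^2 + 35*z^2 = 4*m := hmem
    have hx2 := Int.emod_two_eq x
    have hy2 := Int.emod_two_eq y
    have hz2 := Int.emod_two_eq z
    rcases hx2 with hx|hx <;> rcases hy2 with hy|hy <;> rcases hz2 with hz|hz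
    · exact Or.inl (Or.inl ⟨hmem, hx, hy, hz⟩)
    · obtain ⟨a, ha⟩ := sq_even x hx; obtain ⟨b, hb⟩ := sq_even y hy
      obtain ⟨c, hc⟩ := sq_odd z hz
      rw [ha, hb, hc] at heq; omega
    · obtain ⟨a, ha⟩ := sq_even x hx; obtain ⟨b, hb⟩ := sq_odd y hy
      obtain ⟨c, hc⟩ := sq_even z hz
      rw [ha, hb, hc] at heq; omega
    · have hx4 : x % 4 = 0 ∨ x % 4 = 2 := by omega
      rcases hx4 with hx4|hx4
      · obtain ⟨a, ha⟩ := sq_four x hx4; obtain ⟨b, hb⟩ := sq_odd y hy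
        obtain ⟨c, hc⟩ := sq_odd z hz
        rw [ha, hb, hc] at heq; omega
      · exact Or.inr ⟨hmem, hx4, hy, hz⟩
    · obtain ⟨a, ha⟩ := sq_odd x hx; obtain ⟨b, hb⟩ := sq_even y hy
      obtain ⟨c, hc⟩ := sq_even z hz
      rw [ha, hb, hc] at heq; omega
    · have hy4 : y % 4 = 0 ∨ y % 4 = 2 := by omega
      rcases hy4 with hy4|hy4
      · obtain ⟨a, ha⟩ := sq_odd x hx; obtain ⟨b, hb⟩ := sq_four y hy4
        obtain ⟨c, hc⟩ := sq_odd z hz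
        rw [ha, hb, hc] at heq; omega
      · exact Or.inl (Or.inr ⟨hmem, hx, hy4, hz⟩)
    · obtain ⟨a, ha⟩ := sq_odd x hx; obtain ⟨b, hb⟩ := sq_odd y hy
      obtain ⟨c, hc⟩ := sq_even z hz
      rw [ha, hb, hc] at heq; omega
    · obtain ⟨a, ha⟩ := sq_odd x hx; obtain ⟨b, hb⟩ := sq_odd y hy
      obtain ⟨c, hc⟩ := sq_odd z hz
      rw [ha, hb, hc] at heq; omega
  · intro p hp
    rcases hp with (h | h) | h
    · exact h.1
    · exact h.1
    · exact h.1

/- ### E-set count -/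

lemma ESet_eq_image (m : ℤ) :
    ESet m = (fun p : ℤ×ℤ×ℤ => (2*p.1, 2*p.2.1, 2*p.2.2)) '' Qset m := by
  apply Set.Subset.antisymm
  · rintro ⟨x, y, z⟩ ⟨hq, hx, hy, hz⟩
    replace hx : x % 2 = 0 := hx
    replace hy : y % 2 = 0 := hy
    replace hz : z % 2 = 0 := hz
    have heq : 5*x^2 + 21*y^2 + 35*z^2 = 4*m := hq
    obtain ⟨x', rfl⟩ : ∃ t, x = 2*t := ⟨x/2, by omega⟩
    obtain ⟨y', rfl⟩ : ∃ t, y = 2*t := ⟨y/2, by omega⟩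
    obtain ⟨z', rfl⟩ : ∃ t, z = 2*t := ⟨z/2, by omega⟩
    refine ⟨(x', y', z'), ?_, rfl⟩
    show 5*x'^2 + 21*y'^2 + 35*z'^2 = m
    have key : 4*(5*x'^2 + 21*y'^2 + 35*z'^2) = 4*m := by linear_combination heq
    linarith [key]
  · rintro p ⟨⟨a, b, c⟩, hq, rfl⟩
    have heq : 5*a^2 + 21*b^2 + 35*c^2 = m := hq
    refine ⟨?_, show (2*a) % 2 = 0 by omega, show (2*b) % 2 = 0 by omega,
      show (2*c) % 2 = 0 by omega⟩
    show 5*(2*a)^2 + 21*(2*b)^2 + 35*(2*c)^2 = 4*m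
    linear_combination 4*heq

lemma ESet_ncard (m : ℤ) : (ESet m).ncard = (Qset m).ncard := by
  rw [ESet_eq_image]
  apply Set.ncard_image_of_injective
  rintro ⟨a, b, c⟩ ⟨a', b', c'⟩ h
  simp only [Prod.mk.injEq] at h
  simp only [Prod.mk.injEq]
  omega

def fA : ℤ×ℤ×ℤ → ℤ×ℤ×ℤ
  | (u, v, w) =>
    if (u + w) % 4 = 2 then ((-3*u-7*w)/2, 2*v, (u-3*w)/2)
    else ((-3*u+7*w)/2, 2*v, (-u-3*w)/2)

lemma fA_image (m : ℤ) (hm : m % 8 = 5) : fA '' OSet m = ASet m := by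
  apply Set.Subset.antisymm
  · rintro p ⟨⟨u, v, w⟩, ⟨hq, hu, hv, hw⟩, rfl⟩
    replace hu : u % 2 = 1 := hu
    replace hv : v % 2 = 1 := hv
    replace hw : w % 2 = 1 := hw
    have heq : 5*u^2 + 21*v^2 + 35*w^2 = m := hq
    simp only [fA]
    split_ifs with hc
    · replace hc : (u + w) % 4 = 2 := hc
      have h1 : 2*((-3*u-7*w)/2) = -3*u-7*w := by omega
      have h2 : 2*((u-3*w)/2) = u-3*w := by omega
      have e1 : (2*((-3*u-7*w)/2))^2 = (3*u+7*w)^2 := by rw [h1]; try ring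
      have e2 : (2*((u-3*w)/2))^2 = (u-3*w)^2 := by rw [h2]; try ring
      refine ⟨?_, show ((-3*u-7*w)/2) % 2 = 1 by omega,
        show (2*v) % 4 = 2 by omega, show ((u-3*w)/2) % 2 = 1 by omega⟩
      show 5*((-3*u-7*w)/2)^2 + 21*(2*v)^2 + 35*((u-3*w)/2)^2 = 4*m
      have key : 4*(5*((-3*u-7*w)/2)^2 + 21*(2*v)^2 + 35*((u-3*w)/2)^2) = 4*(4*m) := by
        linear_combination 5*e1 + 35*e2 + 16*heq
      linarith [key]
    · replace hc : (u + w) % 4 ≠ 2 := hc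
      have hc' : (u + w) % 4 = 0 := by omega
      have h1 : 2*((-3*u+7*w)/2) = -3*u+7*w := by omega
      have h2 : 2*((-u-3*w)/2) = -u-3*w := by omega
      have e1 : (2*((-3*u+7*w)/2))^2 = (-3*u+7*w)^2 := by rw [h1]; try ring
      have e2 : (2*((-u-3*w)/2))^2 = (u+3*w)^2 := by rw [h2]; try ring
      refine ⟨?_, show ((-3*u+7*w)/2) % 2 = 1 by omega,
        show (2*v) % 4 = 2 by omega, show ((-u-3*w)/2) % 2 = 1 by omega⟩
      show 5*((-3*u+7*w)/2)^2 + 21*(2*v)^2 + 35*((-u-3*w)/2)^2 = 4*m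
      have key : 4*(5*((-3*u+7*w)/2)^2 + 21*(2*v)^2 + 35*((-u-3*w)/2)^2) = 4*(4*m) := by
        linear_combination 5*e1 + 35*e2 + 16*heq
      linarith [key]
  · rintro ⟨x, y, z⟩ ⟨hq, hx, hy, hz⟩
    replace hx : x % 2 = 1 := hx
    replace hy : y % 4 = 2 := hy
    replace hz : z % 2 = 1 := hz
    have heq : 5*x^2 + 21*y^2 + 35*z^2 = 4*m := hq
    obtain ⟨v, rfl⟩ : ∃ t, y = 2*t := ⟨y/2, by omega⟩
    have hv : v % 2 = 1 := by omega
    obtain ⟨t, ht⟩ := sq_odd v hv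
    have h4 : (2*v)^2 = 32*t+4 := by rw [show (2*v)^2 = 4*v^2 from by ring, ht]; ring
    rw [h4] at heq
    have hdvd : (32:ℤ) ∣ x^2 + 7*z^2 := by omega
    rcases claimA x z hx hz hdvd with ⟨h8, h16a, h16b, h84⟩ | ⟨h8, h16a, h16b, h0⟩
    · have h1 : 8*((-3*x+7*z)/8) = -3*x+7*z := by omega
      have h2 : 8*((-x-3*z)/8) = -x-3*z := by omega
      have e1 : (8*((-3*x+7*z)/8))^2 = (3*x-7*z)^2 := by rw [h1]; try ring
      have e2 : (8*((-x-3*z)/8))^2 = (x+3*z)^2 := by rw [h2]; try ring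
      refine ⟨((-3*x+7*z)/8, v, (-x-3*z)/8),
        ⟨?_, show ((-3*x+7*z)/8) % 2 = 1 by omega, hv, show ((-x-3*z)/8) % 2 = 1 by omega⟩, ?_⟩
      · show 5*((-3*x+7*z)/8)^2 + 21*v^2 + 35*((-x-3*z)/8)^2 = m
        have key : 64*(5*((-3*x+7*z)/8)^2 + 21*v^2 + 35*((-x-3*z)/8)^2) = 64*m := by
          linear_combination 5*e1 + 35*e2 + 16*heq + 1344*ht
        linarith [key]
      · simp only [fA]
        rw [if_pos (show (((-3*x+7*z)/8 : ℤ) + (-x-3*z)/8) % 4 = 2 by omega)]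
        simp only [Prod.mk.injEq]
        refine ⟨by omega, trivial, by omega⟩
    · have h1 : 8*((-3*x-7*z)/8) = -3*x-7*z := by omega
      have h2 : 8*((x-3*z)/8) = x-3*z := by omega
      have e1 : (8*((-3*x-7*z)/8))^2 = (3*x+7*z)^2 := by rw [h1]; try ring
      have e2 : (8*((x-3*z)/8))^2 = (x-3*z)^2 := by rw [h2]; try ring
      refine ⟨((-3*x-7*z)/8, v, (x-3*z)/8),
        ⟨?_, show ((-3*x-7*z)/8) % 2 = 1 by omega, hv, show ((x-3*z)/8) % 2 = 1 by omega⟩, ?_⟩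
      · show 5*((-3*x-7*z)/8)^2 + 21*v^2 + 35*((x-3*z)/8)^2 = m
        have key : 64*(5*((-3*x-7*z)/8)^2 + 21*v^2 + 35*((x-3*z)/8)^2) = 64*m := by
          linear_combination 5*e1 + 35*e2 + 16*heq + 1344*ht
        linarith [key]
      · simp only [fA]
        rw [if_neg (show ¬((((-3*x-7*z)/8 : ℤ) + (x-3*z)/8) % 4 = 2) by omega)]
        simp only [Prod.mk.injEq]
        refine ⟨by omega, trivial, by omega⟩

lemma fA_injOn (m : ℤ) : Set.InjOn fA (OSet m) := by
  rintro ⟨u, v, w⟩ ⟨hq, hu, hv, hw⟩ ⟨u', v', w'⟩ ⟨hq', hu', hv', hw'⟩ h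
  replace hu : u % 2 = 1 := hu
  replace hv : v % 2 = 1 := hv
  replace hw : w % 2 = 1 := hw
  replace hu' : u' % 2 = 1 := hu'
  replace hv' : v' % 2 = 1 := hv'
  replace hw' : w' % 2 = 1 := hw'
  simp only [fA] at h
  split_ifs at h with h1 h2 h2 <;>
    simp only [Prod.mk.injEq] at h <;> simp only [Prod.mk.injEq] <;> omega

def fB : ℤ×ℤ×ℤ → ℤ×ℤ×ℤ
  | (u, v, w) =>
    if (v - w) % 4 = 2 then (2*u, (v-5*w)/2, (3*v+w)/2)
    else (2*u, (v+5*w)/2, (w-3*v)/2)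

lemma fB_image (m : ℤ) (hm : m % 8 = 5) : fB '' OSet m = BSet m := by
  apply Set.Subset.antisymm
  · rintro p ⟨⟨u, v, w⟩, ⟨hq, hu, hv, hw⟩, rfl⟩
    replace hu : u % 2 = 1 := hu
    replace hv : v % 2 = 1 := hv
    replace hw : w % 2 = 1 := hw
    have heq : 5*u^2 + 21*v^2 + 35*w^2 = m := hq
    simp only [fB]
    split_ifs with hc
    · have h1 : 2*((v-5*w)/2) = v-5*w := by omega
      have h2 : 2*((3*v+w)/2) = 3*v+w := by omega
      have e1 : (2*((v-5*w)/2))^2 = (v-5*w)^2 := by rw [h1]; try ring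
      have e2 : (2*((3*v+w)/2))^2 = (3*v+w)^2 := by rw [h2]; try ring
      refine ⟨?_, show (2*u) % 4 = 2 by omega,
        show ((v-5*w)/2) % 2 = 1 by omega, show ((3*v+w)/2) % 2 = 1 by omega⟩
      show 5*(2*u)^2 + 21*((v-5*w)/2)^2 + 35*((3*v+w)/2)^2 = 4*m
      have key : 4*(5*(2*u)^2 + 21*((v-5*w)/2)^2 + 35*((3*v+w)/2)^2) = 4*(4*m) := by
        linear_combination 21*e1 + 35*e2 + 16*heq
      linarith [key]
    · replace hc : (v - w) % 4 ≠ 2 := hc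
      have hc' : (v - w) % 4 = 0 := by omega
      have h1 : 2*((v+5*w)/2) = v+5*w := by omega
      have h2 : 2*((w-3*v)/2) = w-3*v := by omega
      have e1 : (2*((v+5*w)/2))^2 = (v+5*w)^2 := by rw [h1]; try ring
      have e2 : (2*((w-3*v)/2))^2 = (w-3*v)^2 := by rw [h2]; try ring
      refine ⟨?_, show (2*u) % 4 = 2 by omega,
        show ((v+5*w)/2) % 2 = 1 by omega, show ((w-3*v)/2) % 2 = 1 by omega⟩
      show 5*(2*u)^2 + 21*((v+5*w)/2)^2 + 35*((w-3*v)/2)^2 = 4*m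
      have key : 4*(5*(2*u)^2 + 21*((v+5*w)/2)^2 + 35*((w-3*v)/2)^2) = 4*(4*m) := by
        linear_combination 21*e1 + 35*e2 + 16*heq
      linarith [key]
  · rintro ⟨x, y, z⟩ ⟨hq, hx, hy, hz⟩
    replace hx : x % 4 = 2 := hx
    replace hy : y % 2 = 1 := hy
    replace hz : z % 2 = 1 := hz
    have heq : 5*x^2 + 21*y^2 + 35*z^2 = 4*m := hq
    obtain ⟨u, rfl⟩ : ∃ t, x = 2*t := ⟨x/2, by omega⟩
    have hu : u % 2 = 1 := by omega
    obtain ⟨t, ht⟩ := sq_odd u hu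
    have h4 : (2*u)^2 = 32*t+4 := by rw [show (2*u)^2 = 4*u^2 from by ring, ht]; ring
    rw [h4] at heq
    have hdvd : (32:ℤ) ∣ 3*y^2 + 5*z^2 := by omega
    rcases claimB y z hy hz hdvd with ⟨h8, h16a, h16b, h84⟩ | ⟨h8, h16a, h16b, h0⟩
    · have h1 : 8*((y+5*z)/8) = y+5*z := by omega
      have h2 : 8*((z-3*y)/8) = z-3*y := by omega
      have e1 : (8*((y+5*z)/8))^2 = (y+5*z)^2 := by rw [h1]; try ring
      have e2 : (8*((z-3*y)/8))^2 = (z-3*y)^2 := by rw [h2]; try ring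
      refine ⟨(u, (y+5*z)/8, (z-3*y)/8),
        ⟨?_, hu, show ((y+5*z)/8) % 2 = 1 by omega, show ((z-3*y)/8) % 2 = 1 by omega⟩, ?_⟩
      · show 5*u^2 + 21*((y+5*z)/8)^2 + 35*((z-3*y)/8)^2 = m
        have key : 64*(5*u^2 + 21*((y+5*z)/8)^2 + 35*((z-3*y)/8)^2) = 64*m := by
          linear_combination 21*e1 + 35*e2 + 16*heq + 320*ht
        linarith [key]
      · simp only [fB]
        rw [if_pos (show ((((y+5*z)/8 : ℤ)) - (z-3*y)/8) % 4 = 2 by omega)]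
        simp only [Prod.mk.injEq]
        refine ⟨trivial, by omega, by omega⟩
    · have h1 : 8*((y-5*z)/8) = y-5*z := by omega
      have h2 : 8*((3*y+z)/8) = 3*y+z := by omega
      have e1 : (8*((y-5*z)/8))^2 = (y-5*z)^2 := by rw [h1]; try ring
      have e2 : (8*((3*y+z)/8))^2 = (3*y+z)^2 := by rw [h2]; try ring
      refine ⟨(u, (y-5*z)/8, (3*y+z)/8),
        ⟨?_, hu, show ((y-5*z)/8) % 2 = 1 by omega, show ((3*y+z)/8) % 2 = 1 by omega⟩, ?_⟩
      · show 5*u^2 + 21*((y-5*z)/8)^2 + 35*((3*y+z)/8)^2 = m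
        have key : 64*(5*u^2 + 21*((y-5*z)/8)^2 + 35*((3*y+z)/8)^2) = 64*m := by
          linear_combination 21*e1 + 35*e2 + 16*heq + 320*ht
        linarith [key]
      · simp only [fB]
        rw [if_neg (show ¬(((((y-5*z)/8 : ℤ)) - (3*y+z)/8) % 4 = 2) by omega)]
        simp only [Prod.mk.injEq]
        refine ⟨trivial, by omega, by omega⟩

lemma fB_injOn (m : ℤ) : Set.InjOn fB (OSet m) := by
  rintro ⟨u, v, w⟩ ⟨hq, hu, hv, hw⟩ ⟨u', v', w'⟩ ⟨hq', hu', hv', hw'⟩ h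
  replace hu : u % 2 = 1 := hu
  replace hv : v % 2 = 1 := hv
  replace hw : w % 2 = 1 := hw
  replace hu' : u' % 2 = 1 := hu'
  replace hv' : v' % 2 = 1 := hv'
  replace hw' : w' % 2 = 1 := hw'
  simp only [fB] at h
  split_ifs at h with h1 h2 h2 <;>
    simp only [Prod.mk.injEq] at h <;> simp only [Prod.mk.injEq] <;> omega

def Pset (n : ℕ) : Set (ℕ×ℕ×ℕ) :=
  {p | 5 * (p.1 * (p.1 + 1) / 2) + 21 * (p.2.1 * (p.2.1 + 1) / 2)
      + 35 * (p.2.2 * (p.2.2 + 1) / 2) = n}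

def sg : Bool → ℕ → ℤ
  | true, a => 2*a+1
  | false, a => -(2*a+1)

lemma sg_inj {s : Bool} {a : ℕ} {s' : Bool} {a' : ℕ} (h : sg s a = sg s' a') :
    s = s' ∧ a = a' := by
  cases s <;> cases s' <;> simp only [sg] at h
  · exact ⟨rfl, by omega⟩
  · exact absurd h (by omega)
  · exact absurd h (by omega)
  · exact ⟨rfl, by omega⟩

lemma sg_odd (s : Bool) (a : ℕ) : sg s a % 2 = 1 := by
  cases s <;> simp only [sg] <;> omega

lemma sg_sq (s : Bool) (a : ℕ) : (sg s a)^2 = (2*(a:ℤ)+1)^2 := by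
  cases s <;> simp only [sg] <;> ring

def G : (ℕ×ℕ×ℕ) × (Bool×Bool×Bool) → ℤ×ℤ×ℤ
  | ((a,b,c), (s,t,r)) => (sg s a, sg t b, sg r c)

lemma G_inj : Function.Injective G := by
  rintro ⟨⟨a,b,c⟩,s,t,r⟩ ⟨⟨a',b',c'⟩,s',t',r'⟩ h
  simp only [G, Prod.mk.injEq] at h
  obtain ⟨h1, h2, h3⟩ := h
  obtain ⟨e1, e1'⟩ := sg_inj h1
  obtain ⟨e2, e2'⟩ := sg_inj h2
  obtain ⟨e3, e3'⟩ := sg_inj h3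
  simp only [Prod.mk.injEq]
  exact ⟨⟨e1', e2', e3'⟩, e1, e2, e3⟩

lemma tri_half (a : ℕ) : 2 * (a * (a + 1) / 2) = a * (a + 1) := by
  rw [Nat.mul_div_cancel' (even_iff_two_dvd.mp (Nat.even_mul_succ_self a))]

lemma G_image (n : ℕ) :
    G '' (Pset n ×ˢ (Set.univ : Set (Bool×Bool×Bool))) = OSet (8*(n:ℤ)+61) := by
  apply Set.Subset.antisymm
  · rintro p ⟨⟨⟨a,b,c⟩,⟨s,t,r⟩⟩, ⟨hP, -⟩, rfl⟩
    replace hP : 5 * (a * (a + 1) / 2) + 21 * (b * (b + 1) / 2)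
        + 35 * (c * (c + 1) / 2) = n := hP
    have hPZ : 5 * ((a * (a + 1) / 2 : ℕ) : ℤ) + 21 * ((b * (b + 1) / 2 : ℕ) : ℤ)
        + 35 * ((c * (c + 1) / 2 : ℕ) : ℤ) = (n : ℤ) := by exact_mod_cast congrArg Nat.cast hP
    have ha2 : 2 * ((a * (a + 1) / 2 : ℕ) : ℤ) = (a:ℤ) * ((a:ℤ)+1) := by
      exact_mod_cast congrArg Nat.cast (tri_half a)
    have hb2 : 2 * ((b * (b + 1) / 2 : ℕ) : ℤ) = (b:ℤ) * ((b:ℤ)+1) := by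
      exact_mod_cast congrArg Nat.cast (tri_half b)
    have hc2 : 2 * ((c * (c + 1) / 2 : ℕ) : ℤ) = (c:ℤ) * ((c:ℤ)+1) := by
      exact_mod_cast congrArg Nat.cast (tri_half c)
    refine ⟨?_, sg_odd s a, sg_odd t b, sg_odd r c⟩
    show 5*(sg s a)^2 + 21*(sg t b)^2 + 35*(sg r c)^2 = 8*(n:ℤ)+61
    rw [sg_sq, sg_sq, sg_sq]
    linear_combination 8*hPZ - 20*ha2 - 84*hb2 - 140*hc2
  · rintro ⟨u, v, w⟩ ⟨hq, hu, hv, hw⟩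
    replace hu : u % 2 = 1 := hu
    replace hv : v % 2 = 1 := hv
    replace hw : w % 2 = 1 := hw
    have heq : 5*u^2 + 21*v^2 + 35*w^2 = 8*(n:ℤ)+61 := hq
    set a := (u.natAbs - 1)/2 with hadef
    set b := (v.natAbs - 1)/2 with hbdef
    set c := (w.natAbs - 1)/2 with hcdef
    have hu1 : sg (decide (0 < u)) a = u := by
      by_cases h : 0 < u
      · rw [(by simp [h] : decide (0 < u) = true)]; simp only [sg]; omega
      · rw [(by simp [h] : decide (0 < u) = false)]; simp only [sg]; omega
    have hv1 : sg (decide (0 < v)) b = v := by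
      by_cases h : 0 < v
      · rw [(by simp [h] : decide (0 < v) = true)]; simp only [sg]; omega
      · rw [(by simp [h] : decide (0 < v) = false)]; simp only [sg]; omega
    have hw1 : sg (decide (0 < w)) c = w := by
      by_cases h : 0 < w
      · rw [(by simp [h] : decide (0 < w) = true)]; simp only [sg]; omega
      · rw [(by simp [h] : decide (0 < w) = false)]; simp only [sg]; omega
    have hu2 : (2*(a:ℤ)+1)^2 = u^2 := by
      rw [← hu1, sg_sq]
    have hv2 : (2*(b:ℤ)+1)^2 = v^2 := by
      rw [← hv1, sg_sq]
    have hw2 : (2*(c:ℤ)+1)^2 = w^2 := by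
      rw [← hw1, sg_sq]
    have heq2 : 5*(2*(a:ℤ)+1)^2 + 21*(2*(b:ℤ)+1)^2 + 35*(2*(c:ℤ)+1)^2 = 8*(n:ℤ)+61 := by
      rw [hu2, hv2, hw2]; exact heq
    have ha2 : 2 * ((a * (a + 1) / 2 : ℕ) : ℤ) = (a:ℤ) * ((a:ℤ)+1) := by
      exact_mod_cast congrArg Nat.cast (tri_half a)
    have hb2 : 2 * ((b * (b + 1) / 2 : ℕ) : ℤ) = (b:ℤ) * ((b:ℤ)+1) := by
      exact_mod_cast congrArg Nat.cast (tri_half b)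
    have hc2 : 2 * ((c * (c + 1) / 2 : ℕ) : ℤ) = (c:ℤ) * ((c:ℤ)+1) := by
      exact_mod_cast congrArg Nat.cast (tri_half c)
    have key : 8*(5 * ((a * (a + 1) / 2 : ℕ) : ℤ) + 21 * ((b * (b + 1) / 2 : ℕ) : ℤ)
        + 35 * ((c * (c + 1) / 2 : ℕ) : ℤ)) = 8*(n : ℤ) := by
      linear_combination heq2 + 20*ha2 + 84*hb2 + 140*hc2
    refine ⟨((a,b,c), (decide (0 < u), decide (0 < v), decide (0 < w))), ⟨?_, trivial⟩, ?_⟩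
    · show 5 * (a * (a + 1) / 2) + 21 * (b * (b + 1) / 2) + 35 * (c * (c + 1) / 2) = n
      omega
    · simp only [G, Prod.mk.injEq]
      exact ⟨hu1, hv1, hw1⟩

lemma OSet_ncard (n : ℕ) : (OSet (8*(n:ℤ)+61)).ncard = 8 * (Pset n).ncard := by
  have h8 : Nat.card (↥(Set.univ : Set (Bool×Bool×Bool))) = 8 := by
    rw [Nat.card_congr (Equiv.Set.univ _)]
    simp [Nat.card_eq_fintype_card]
  rw [← G_image n, Set.ncard_image_of_injective _ G_inj, ← Nat.card_coe_set_eq,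
    Nat.card_congr (Equiv.Set.prod _ _), Nat.card_prod, h8, Nat.card_coe_set_eq,
    mul_comm]

lemma N_eq (K : ℕ) : N 5 21 35 K = (Qset (K : ℤ)).ncard := by
  rw [← Nat.card_coe_set_eq]
  apply Nat.card_congr
  apply Equiv.subtypeEquivRight
  intro p
  simp only [Qset, Set.mem_setOf_eq]
  push_cast
  constructor <;> intro h <;> linarith

lemma T_eq (n : ℕ) : T 5 21 35 n = (Pset n).ncard := by
  rw [← Nat.card_coe_set_eq]
  exact Nat.card_congr (Equiv.subtypeEquivRight fun p => Iff.rfl)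

end Stmt7Aux

open Stmt7Aux in
theorem stmt_7 (n : ℕ) (hn : 0 < n) :
    (16 * T 5 21 35 n : ℤ) = (N 5 21 35 (4 * (8 * n + 61)) : ℤ) - (N 5 21 35 (8 * n + 61) : ℤ) := by
  set m : ℤ := 8*(n:ℤ)+61 with hmdef
  have hm : m % 8 = 5 := by omega
  have hQfin := Qset_finite (4*m)
  have hEfin : (ESet m).Finite := hQfin.subset (fun p hp => hp.1)
  have hAfin : (ASet m).Finite := hQfin.subset (fun p hp => hp.1)
  have hBfin : (BSet m).Finite := hQfin.subset (fun p hp => hp.1)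
  have hd1 : Disjoint (ESet m) (ASet m) := by
    rw [Set.disjoint_left]
    rintro ⟨x,y,z⟩ ⟨-,hx,-,-⟩ ⟨-,hx',-,-⟩
    replace hx : x % 2 = 0 := hx
    replace hx' : x % 2 = 1 := hx'
    omega
  have hd2 : Disjoint (ESet m) (BSet m) := by
    rw [Set.disjoint_left]
    rintro ⟨x,y,z⟩ ⟨-,-,hy,-⟩ ⟨-,-,hy',-⟩
    replace hy : y % 2 = 0 := hy
    replace hy' : y % 2 = 1 := hy'
    omega
  have hd3 : Disjoint (ASet m) (BSet m) := by
    rw [Set.disjoint_left]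
    rintro ⟨x,y,z⟩ ⟨-,hx,-,-⟩ ⟨-,hx',-,-⟩
    replace hx : x % 2 = 1 := hx
    replace hx' : x % 4 = 2 := hx'
    omega
  have hsplit : (Qset (4*m)).ncard
      = (Qset m).ncard + ((OSet m).ncard + (OSet m).ncard) := by
    rw [partition m hm,
      Set.ncard_union_eq (Set.disjoint_union_left.mpr ⟨hd2, hd3⟩) (hEfin.union hAfin) hBfin,
      Set.ncard_union_eq hd1 hEfin hAfin, ESet_ncard,
      ← fA_image m hm, Set.ncard_image_of_injOn (fA_injOn m),
      ← fB_image m hm, Set.ncard_image_of_injOn (fB_injOn m)]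
    omega
  have harg4 : ((4*(8*n+61) : ℕ) : ℤ) = 4*m := by push_cast; ring
  have harg1 : ((8*n+61 : ℕ) : ℤ) = m := by push_cast; ring
  have hN4 : N 5 21 35 (4*(8*n+61)) = (Qset (4*m)).ncard := by
    rw [N_eq, harg4]
  have hNm : N 5 21 35 (8*n+61) = (Qset m).ncard := by
    rw [N_eq, harg1]
  have hO : (OSet m).ncard = 8 * T 5 21 35 n := by
    rw [T_eq]
    exact OSet_ncard n
  rw [hN4, hNm]
  omega
end

section
/- For every positive integer n, 16·T(3,7,15;n) = 3·N(3,7,15;8n+25) − N(3,7,15;4(8n+25)). -/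
private def sg (b : Bool) : ℤ := if b then 1 else -1

private lemma sq_key' (w : ℕ) : (2*(w:ℤ)+1)^2 = 8*((w*(w+1)/2 : ℕ) : ℤ) + 1 := by
  have h2 : 2 * (w*(w+1)/2) = w*(w+1) := Nat.mul_div_cancel' (Nat.even_mul_succ_self w).two_dvd
  have h2' : 2*((w*(w+1)/2 : ℕ):ℤ) = (w:ℤ)*((w:ℤ)+1) := by exact_mod_cast h2
  linear_combination (-4) * h2'

private lemma sq_key (b : Bool) (w : ℕ) :
    (sg b * (2*(w:ℤ)+1))^2 = 8*((w*(w+1)/2 : ℕ) : ℤ) + 1 := by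
  have hsq : (sg b)^2 = 1 := by cases b <;> simp [sg]
  calc (sg b * (2*(w:ℤ)+1))^2 = (sg b)^2 * (2*(w:ℤ)+1)^2 := by ring
  _ = (2*(w:ℤ)+1)^2 := by rw [hsq]; ring
  _ = _ := sq_key' w

private lemma odd_of_sq8 {a : ℤ} (h : (a : ZMod 8)^2 = 1) : Odd a := by
  rcases Int.even_or_odd a with he | ho
  · obtain ⟨k, hk⟩ := he
    have hk' : (a : ZMod 8) = (k : ZMod 8) + (k : ZMod 8) := by rw [hk]; push_cast; ring
    rw [hk'] at h
    have key : ∀ t : ZMod 8, (t+t)^2 ≠ 1 := by decide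
    exact absurd h (key _)
  · exact ho

private lemma even_of_sq4 {a : ℤ} (h : (a : ZMod 4)^2 = 0) : (2:ℤ) ∣ a := by
  rcases Int.even_or_odd a with he | ho
  · exact he.two_dvd
  · obtain ⟨k, hk⟩ := ho
    have hk' : (a : ZMod 4) = 2*(k : ZMod 4) + 1 := by rw [hk]; push_cast; ring
    rw [hk'] at h
    have key : ∀ t : ZMod 4, (2*t+1)^2 ≠ 0 := by decide
    exact absurd h (key _)

private lemma odd_of (a b c : ℤ) (n : ℕ) (h : 3*a^2+7*b^2+15*c^2 = ((8*n+25 : ℕ):ℤ)) :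
    Odd a ∧ Odd b ∧ Odd c := by
  have h8 : 3*(a:ZMod 8)^2+7*(b:ZMod 8)^2+15*(c:ZMod 8)^2 = 1 := by
    have hc := congrArg (fun t : ℤ => (t : ZMod 8)) h
    push_cast at hc
    rw [hc, show (8:ZMod 8) = 0 from by decide, zero_mul, zero_add]
    decide
  have key8 : ∀ x y z : ZMod 8, 3*x^2+7*y^2+15*z^2 = 1 → x^2=1 ∧ y^2=1 ∧ z^2=1 := by decide
  obtain ⟨ha, hb, hcc⟩ := key8 _ _ _ h8
  exact ⟨odd_of_sq8 ha, odd_of_sq8 hb, odd_of_sq8 hcc⟩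

private lemma even_of (a b c : ℤ) (n : ℕ)
    (h : 3*a^2+7*b^2+15*c^2 = ((4*(8*n+25) : ℕ):ℤ)) : (2:ℤ) ∣ a ∧ (2:ℤ) ∣ b ∧ (2:ℤ) ∣ c := by
  have h4 : 3*(a:ZMod 4)^2+7*(b:ZMod 4)^2+15*(c:ZMod 4)^2 = 0 := by
    have hc := congrArg (fun t : ℤ => (t : ZMod 4)) h
    push_cast at hc
    rw [hc, show (4:ZMod 4) = 0 from by decide, zero_mul]
  have key4 : ∀ x y z : ZMod 4, 3*x^2+7*y^2+15*z^2 = 0 → x^2=0 ∧ y^2=0 ∧ z^2=0 := by decide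
  obtain ⟨ha, hb, hcc⟩ := key4 _ _ _ h4
  exact ⟨even_of_sq4 ha, even_of_sq4 hb, even_of_sq4 hcc⟩

private def fA (n : ℕ)
    (q : (Bool × Bool × Bool) ×
      {p : ℕ × ℕ × ℕ // 3 * (p.1 * (p.1 + 1) / 2) + 7 * (p.2.1 * (p.2.1 + 1) / 2)
        + 15 * (p.2.2 * (p.2.2 + 1) / 2) = n}) :
    {p : ℤ × ℤ × ℤ // ((3:ℕ) : ℤ) * p.1 ^ 2 + ((7:ℕ) : ℤ) * p.2.1 ^ 2
      + ((15:ℕ) : ℤ) * p.2.2 ^ 2 = ((8*n+25 : ℕ) : ℤ)} :=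
  ⟨(sg q.1.1 * (2*(q.2.val.1 : ℤ)+1), sg q.1.2.1 * (2*(q.2.val.2.1 : ℤ)+1),
    sg q.1.2.2 * (2*(q.2.val.2.2 : ℤ)+1)), by
      obtain ⟨⟨s,t,u⟩, ⟨⟨x,y,z⟩, h⟩⟩ := q
      simp only
      rw [sq_key s x, sq_key t y, sq_key u z]
      have hz : (3:ℤ) * ((x*(x+1)/2 : ℕ) : ℤ) + 7*((y*(y+1)/2 : ℕ):ℤ)
          + 15*((z*(z+1)/2 : ℕ):ℤ) = (n:ℤ) := by exact_mod_cast h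
      push_cast
      push_cast at hz
      linarith⟩

private lemma comp_sign (a : ℤ) (oa : Odd a) :
    sg (decide (0 ≤ a)) * (2*((a.natAbs/2 : ℕ):ℤ)+1) = a := by
  obtain ⟨k, hk⟩ := oa
  by_cases h0 : 0 ≤ a
  · simp only [decide_eq_true h0, sg, if_true]
    omega
  · simp only [decide_eq_false h0, sg, Bool.false_eq_true, if_false]
    omega

private lemma cardA (n : ℕ) : N 3 7 15 (8*n+25) = 8 * T 3 7 15 n := by
  have hbij : Function.Bijective (fA n) := by
    constructor
    · rintro ⟨⟨s,t,u⟩, ⟨⟨x,y,z⟩, h⟩⟩ ⟨⟨s',t',u'⟩, ⟨⟨x',y',z'⟩, h'⟩⟩ heq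
      simp only [fA, Subtype.mk.injEq, Prod.mk.injEq] at heq
      obtain ⟨h1, h2, h3⟩ := heq
      have key : ∀ (b b' : Bool) (w w' : ℕ), sg b * (2*(w:ℤ)+1) = sg b' * (2*(w':ℤ)+1)
          → b = b' ∧ w = w' := by
        intro b b' w w' hh
        cases b <;> cases b' <;> simp [sg] at hh ⊢ <;> omega
      obtain ⟨e1, e1'⟩ := key _ _ _ _ h1
      obtain ⟨e2, e2'⟩ := key _ _ _ _ h2
      obtain ⟨e3, e3'⟩ := key _ _ _ _ h3
      subst e1; subst e2; subst e3; subst e1'; subst e2'; subst e3'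
      rfl
    · rintro ⟨⟨a,b,c⟩, h⟩
      have h' : 3*a^2+7*b^2+15*c^2 = ((8*n+25 : ℕ):ℤ) := by push_cast at h ⊢; linarith
      obtain ⟨oa, ob, oc⟩ := odd_of a b c n h'
      set x := a.natAbs / 2 with hxd
      set y := b.natAbs / 2 with hyd
      set z := c.natAbs / 2 with hzd
      have ea : a^2 = (2*(x:ℤ)+1)^2 := by
        obtain ⟨k, hk⟩ := oa
        have : a = 2*(x:ℤ)+1 ∨ a = -(2*(x:ℤ)+1) := by rw [hxd]; omega
        rcases this with hh | hh <;> rw [hh] <;> ring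
      have eb : b^2 = (2*(y:ℤ)+1)^2 := by
        obtain ⟨k, hk⟩ := ob
        have : b = 2*(y:ℤ)+1 ∨ b = -(2*(y:ℤ)+1) := by rw [hyd]; omega
        rcases this with hh | hh <;> rw [hh] <;> ring
      have ec : c^2 = (2*(z:ℤ)+1)^2 := by
        obtain ⟨k, hk⟩ := oc
        have : c = 2*(z:ℤ)+1 ∨ c = -(2*(z:ℤ)+1) := by rw [hzd]; omega
        rcases this with hh | hh <;> rw [hh] <;> ring
      have htri : 3 * (x*(x+1)/2) + 7 * (y*(y+1)/2) + 15 * (z*(z+1)/2) = n := by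
        have k1 := sq_key' x
        have k2 := sq_key' y
        have k3 := sq_key' z
        have h8 : ((8*n+25 : ℕ):ℤ) = 8*(n:ℤ)+25 := by push_cast; ring
        have : (3:ℤ)*((x*(x+1)/2 : ℕ):ℤ) + 7*((y*(y+1)/2 : ℕ):ℤ)
            + 15*((z*(z+1)/2 : ℕ):ℤ) = (n:ℤ) := by
          rw [ea, eb, ec] at h'
          rw [k1, k2, k3, h8] at h'
          linarith
        exact_mod_cast this
      refine ⟨⟨(decide (0 ≤ a), decide (0 ≤ b), decide (0 ≤ c)), ⟨(x,y,z), htri⟩⟩,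
        Subtype.ext ?_⟩
      simp only [fA]
      exact Prod.ext (comp_sign a oa) (Prod.ext (comp_sign b ob) (comp_sign c oc))
  have e := Equiv.ofBijective (fA n) hbij
  have hcard := Nat.card_congr e
  rw [Nat.card_prod] at hcard
  have hb : Nat.card (Bool × Bool × Bool) = 8 := by
    simp [Nat.card_eq_fintype_card]
  rw [hb] at hcard
  unfold N T
  exact hcard.symm

private def fB (n : ℕ)
    (q : {p : ℤ × ℤ × ℤ // ((3:ℕ) : ℤ) * p.1 ^ 2 + ((7:ℕ) : ℤ) * p.2.1 ^ 2
      + ((15:ℕ) : ℤ) * p.2.2 ^ 2 = ((8*n+25 : ℕ) : ℤ)}) :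
    {p : ℤ × ℤ × ℤ // ((3:ℕ) : ℤ) * p.1 ^ 2 + ((7:ℕ) : ℤ) * p.2.1 ^ 2
      + ((15:ℕ) : ℤ) * p.2.2 ^ 2 = ((4*(8*n+25) : ℕ) : ℤ)} :=
  ⟨(2*q.val.1, 2*q.val.2.1, 2*q.val.2.2), by
    obtain ⟨⟨a,b,c⟩, h⟩ := q
    simp only
    push_cast at h ⊢
    linarith⟩

private lemma cardB (n : ℕ) : N 3 7 15 (4*(8*n+25)) = N 3 7 15 (8*n+25) := by
  have hbij : Function.Bijective (fB n) := by
    constructor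
    · rintro ⟨⟨a,b,c⟩, h⟩ ⟨⟨a',b',c'⟩, h'⟩ heq
      simp only [fB, Subtype.mk.injEq, Prod.mk.injEq] at heq
      obtain ⟨h1, h2, h3⟩ := heq
      have e1 : a = a' := by omega
      have e2 : b = b' := by omega
      have e3 : c = c' := by omega
      subst e1; subst e2; subst e3; rfl
    · rintro ⟨⟨a,b,c⟩, h⟩
      have h' : 3*a^2+7*b^2+15*c^2 = ((4*(8*n+25) : ℕ):ℤ) := by push_cast at h ⊢; linarith
      obtain ⟨⟨a', ha⟩, ⟨b', hb⟩, ⟨c', hc⟩⟩ := even_of a b c n h'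
      have hmem : ((3:ℕ) : ℤ) * a' ^ 2 + ((7:ℕ) : ℤ) * b' ^ 2
          + ((15:ℕ) : ℤ) * c' ^ 2 = ((8*n+25 : ℕ) : ℤ) := by
        have h4 : (4:ℤ) * (3*a'^2+7*b'^2+15*c'^2) = 4 * ((8*n+25 : ℕ):ℤ) := by
          rw [ha, hb, hc] at h'
          push_cast at h' ⊢
          linarith
        have h5 := mul_left_cancel₀ (by norm_num : (4:ℤ) ≠ 0) h4
        push_cast at h5 ⊢
        linarith
      refine ⟨⟨(a', b', c'), hmem⟩, Subtype.ext ?_⟩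
      simp only [fB]
      exact Prod.ext ha.symm (Prod.ext hb.symm hc.symm)
  have hcard := Nat.card_congr (Equiv.ofBijective (fB n) hbij)
  unfold N
  exact hcard.symm

theorem stmt_13 (n : ℕ) (hn : 0 < n) :
    (16 * T 3 7 15 n : ℤ) = 3 * (N 3 7 15 (8 * n + 25) : ℤ) - (N 3 7 15 (4 * (8 * n + 25)) : ℤ) := by
  rw [cardB n, cardA n]
  push_cast
  ring
end

section
/- For every nonnegative integer n, T(1,6,7;2n+1) = T(1,3,7;n), i.e., the number of representations of 2n+1 as x(x+1)/2 + 6·y(y+1)/2 + 7·z(z+1)/2 with x,y,z ∈ ℕ equals the number of representations of n as x(x+1)/2 + 3·y(y+1)/2 + 7·z(z+1)/2 with x,y,z ∈ ℕ. -/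
namespace Stmt18Aux

def f1 (a c : ℕ) : ℕ :=
  if a % 2 = c % 2 then ((a - (7*c+3)) + ((7*c+3) - a) - 1) / 2 else (a + 7*c + 3) / 2
def f2 (a c : ℕ) : ℕ :=
  if a % 2 = c % 2 then (a + c) / 2 else ((a - c) + (c - a) - 1) / 2
def g1 (x z : ℕ) : ℕ :=
  if x % 2 = z % 2 then (x + 7*z + 2) / 4 else ((x - (7*z+3)) + ((7*z+3) - x) - 2) / 4
def g2 (x z : ℕ) : ℕ :=
  if x % 2 = z % 2 then ((z - x) + (x - z) - 2) / 4 else (x + z - 1) / 4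

lemma tri8 (x : ℕ) : 8 * (x * (x + 1) / 2) + 1 = (2 * x + 1) ^ 2 := by
  have h : x * (x + 1) / 2 * 2 = x * (x + 1) :=
    Nat.div_mul_cancel (Nat.even_mul_succ_self x).two_dvd
  have h2 : (2 * x + 1) ^ 2 = 4 * (x * (x + 1)) + 1 := by ring
  rw [h2]
  generalize hw : x * (x + 1) = w at h ⊢
  omega

lemma osq16 (X : ℤ) (hX : X % 2 = 1) :
    ((X % 8 = 1 ∨ X % 8 = 7) ∧ X ^ 2 % 16 = 1) ∨
    ((X % 8 = 3 ∨ X % 8 = 5) ∧ X ^ 2 % 16 = 9) := by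
  have h8 : X % 8 = 1 ∨ X % 8 = 3 ∨ X % 8 = 5 ∨ X % 8 = 7 := by omega
  rcases h8 with h | h | h | h
  · left; refine ⟨Or.inl h, ?_⟩
    have hq : X = 8 * (X / 8) + 1 := by omega
    have e : X ^ 2 = 1 + 16 * (4 * (X / 8) ^ 2 + X / 8) := by
      linear_combination (X + 8 * (X / 8) + 1) * hq
    rw [e, Int.add_mul_emod_self_left]; norm_num
  · right; refine ⟨Or.inl h, ?_⟩
    have hq : X = 8 * (X / 8) + 3 := by omega
    have e : X ^ 2 = 9 + 16 * (4 * (X / 8) ^ 2 + 3 * (X / 8)) := by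
      linear_combination (X + 8 * (X / 8) + 3) * hq
    rw [e, Int.add_mul_emod_self_left]; norm_num
  · right; refine ⟨Or.inr h, ?_⟩
    have hq : X = 8 * (X / 8) + 5 := by omega
    have e : X ^ 2 = 9 + 16 * (4 * (X / 8) ^ 2 + 5 * (X / 8) + 1) := by
      linear_combination (X + 8 * (X / 8) + 5) * hq
    rw [e, Int.add_mul_emod_self_left]; norm_num
  · left; refine ⟨Or.inr h, ?_⟩
    have hq : X = 8 * (X / 8) + 7 := by omega
    have e : X ^ 2 = 1 + 16 * (4 * (X / 8) ^ 2 + 7 * (X / 8) + 3) := by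
      linear_combination (X + 8 * (X / 8) + 7) * hq
    rw [e, Int.add_mul_emod_self_left]; norm_num

lemma key16 (X Z : ℤ) (hX : X % 2 = 1) (hZ : Z % 2 = 1)
    (h : (X ^ 2 + 7 * Z ^ 2) % 16 = 0) :
    (X - Z) % 8 ≠ 0 ∧ (X + Z) % 8 ≠ 0 := by
  have h1 := osq16 X hX
  have h2 := osq16 Z hZ
  generalize hu : X ^ 2 = u at h h1
  generalize hv : Z ^ 2 = v at h h2
  omega

lemma norm_parity (x z m : ℕ) (h : (2*x+1)^2 + 7*(2*z+1)^2 = 16*m) :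
    x % 4 ≠ z % 4 ∧ (x + z + 1) % 4 ≠ 0 := by
  have hz : (2*(x:ℤ)+1)^2 + 7*(2*(z:ℤ)+1)^2 = 16*(m:ℤ) := by exact_mod_cast h
  have h16 : ((2*(x:ℤ)+1)^2 + 7*(2*(z:ℤ)+1)^2) % 16 = 0 := by
    rw [hz]; simp [Int.mul_emod_right]
  obtain ⟨k1, k2⟩ := key16 _ _ (by omega) (by omega) h16
  constructor
  · intro hc; apply k1; omega
  · intro hc; apply k2; omega

lemma g_lin (x z : ℕ) (p1 : x % 4 ≠ z % 4) (p2 : (x + z + 1) % 4 ≠ 0) :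
    (4 * (2 * (g1 x z : ℤ) + 1) = (2*x+1) + 7*(2*z+1) ∧
      (4 * (2 * (g2 x z : ℤ) + 1) = (2*z+1) - (2*x+1) ∨
       4 * (2 * (g2 x z : ℤ) + 1) = (2*x+1) - (2*z+1))) ∨
    ((4 * (2 * (g1 x z : ℤ) + 1) = (2*x+1) - 7*(2*z+1) ∨
      4 * (2 * (g1 x z : ℤ) + 1) = 7*(2*z+1) - (2*x+1)) ∧
      4 * (2 * (g2 x z : ℤ) + 1) = (2*x+1) + (2*z+1)) := by
  unfold g1 g2; split_ifs with hb
  · left; exact ⟨by omega, by omega⟩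
  · right; exact ⟨by omega, by omega⟩

lemma f_lin (a c : ℕ) :
    ((2 * (2 * (f1 a c : ℤ) + 1) = (2*a+1) - 7*(2*c+1) ∨
      2 * (2 * (f1 a c : ℤ) + 1) = 7*(2*c+1) - (2*a+1)) ∧
      2 * (2 * (f2 a c : ℤ) + 1) = (2*a+1) + (2*c+1)) ∨
    (2 * (2 * (f1 a c : ℤ) + 1) = (2*a+1) + 7*(2*c+1) ∧
      (2 * (2 * (f2 a c : ℤ) + 1) = (2*c+1) - (2*a+1) ∨
       2 * (2 * (f2 a c : ℤ) + 1) = (2*a+1) - (2*c+1))) := by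
  unfold f1 f2; split_ifs with hb
  · left; exact ⟨by omega, by omega⟩
  · right; exact ⟨by omega, by omega⟩

lemma gf (a c : ℕ) : g1 (f1 a c) (f2 a c) = a ∧ g2 (f1 a c) (f2 a c) = c := by
  have hf := f_lin a c
  have p1 : (f1 a c) % 4 ≠ (f2 a c) % 4 := by omega
  have p2 : ((f1 a c) + (f2 a c) + 1) % 4 ≠ 0 := by omega
  have hg := g_lin (f1 a c) (f2 a c) p1 p2
  constructor <;> omega

lemma fg (x z : ℕ) (p1 : x % 4 ≠ z % 4) (p2 : (x + z + 1) % 4 ≠ 0) :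
    f1 (g1 x z) (g2 x z) = x ∧ f2 (g1 x z) (g2 x z) = z := by
  have hg := g_lin x z p1 p2
  have hf := f_lin (g1 x z) (g2 x z)
  constructor <;> omega

lemma g_spec (x z m : ℕ) (h : (2*x+1)^2 + 7*(2*z+1)^2 = 16*m) :
    (2 * g1 x z + 1)^2 + 7 * (2 * g2 x z + 1)^2 = 8 * m := by
  obtain ⟨p1, p2⟩ := norm_parity x z m h
  have hz : (2*(x:ℤ)+1)^2 + 7*(2*(z:ℤ)+1)^2 = 16*(m:ℤ) := by exact_mod_cast h
  have goal' : (2*(g1 x z : ℤ)+1)^2 + 7*(2*(g2 x z : ℤ)+1)^2 = 8*(m:ℤ) := by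
    rcases g_lin x z p1 p2 with ⟨e1, e2 | e2⟩ | ⟨e1 | e1, e2⟩ <;>
    · have q1 : (4*(2*(g1 x z : ℤ)+1))^2 + 7*(4*(2*(g2 x z : ℤ)+1))^2
          = 8*((2*(x:ℤ)+1)^2 + 7*(2*(z:ℤ)+1)^2) := by rw [e1, e2]; ring
      linarith [q1, hz]
  exact_mod_cast goal'

lemma f_spec (a c m : ℕ) (h : (2*a+1)^2 + 7*(2*c+1)^2 = 8*m) :
    (2 * f1 a c + 1)^2 + 7 * (2 * f2 a c + 1)^2 = 16 * m := by
  have hz : (2*(a:ℤ)+1)^2 + 7*(2*(c:ℤ)+1)^2 = 8*(m:ℤ) := by exact_mod_cast h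
  have goal' : (2*(f1 a c : ℤ)+1)^2 + 7*(2*(f2 a c : ℤ)+1)^2 = 16*(m:ℤ) := by
    rcases f_lin a c with ⟨e1 | e1, e2⟩ | ⟨e1, e2 | e2⟩ <;>
    · have q1 : (2*(2*(f1 a c : ℤ)+1))^2 + 7*(2*(2*(f2 a c : ℤ)+1))^2
          = 8*((2*(a:ℤ)+1)^2 + 7*(2*(c:ℤ)+1)^2) := by rw [e1, e2]; ring
      linarith [q1, hz]
  exact_mod_cast goal'

lemma fwd_mem (n x y z : ℕ)
    (h : 1 * (x * (x + 1) / 2) + 6 * (y * (y + 1) / 2) + 7 * (z * (z + 1) / 2) = 2 * n + 1) :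
    1 * (g1 x z * (g1 x z + 1) / 2) + 3 * (y * (y + 1) / 2)
      + 7 * (g2 x z * (g2 x z + 1) / 2) = n := by
  have t1 := tri8 x
  have t2 := tri8 y
  have t3 := tri8 z
  have hm : (2*x+1)^2 + 7*(2*z+1)^2 = 16*(n + 1 - 3*(y*(y+1)/2)) := by
    generalize e1 : (2*x+1)^2 = sx at t1 ⊢
    generalize e2 : (2*y+1)^2 = sy at t2
    generalize e3 : (2*z+1)^2 = sz at t3 ⊢
    generalize e4 : x*(x+1)/2 = tx at t1 h
    generalize e5 : y*(y+1)/2 = ty at t2 h ⊢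
    generalize e6 : z*(z+1)/2 = tz at t3 h
    omega
  have hs := g_spec x z _ hm
  have t4 := tri8 (g1 x z)
  have t5 := tri8 (g2 x z)
  generalize e1 : (2*(g1 x z)+1)^2 = s4 at t4 hs
  generalize e2 : (2*(g2 x z)+1)^2 = s5 at t5 hs
  generalize e3 : (g1 x z)*((g1 x z)+1)/2 = u4 at t4 ⊢
  generalize e4 : (g2 x z)*((g2 x z)+1)/2 = u5 at t5 ⊢
  generalize e5 : y*(y+1)/2 = ty at hs ⊢
  omega

lemma bwd_mem (n a b c : ℕ)
    (h : 1 * (a * (a + 1) / 2) + 3 * (b * (b + 1) / 2) + 7 * (c * (c + 1) / 2) = n) :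
    1 * (f1 a c * (f1 a c + 1) / 2) + 6 * (b * (b + 1) / 2)
      + 7 * (f2 a c * (f2 a c + 1) / 2) = 2 * n + 1 := by
  have t1 := tri8 a
  have t2 := tri8 b
  have t3 := tri8 c
  have hm : (2*a+1)^2 + 7*(2*c+1)^2 = 8*(n + 1 - 3*(b*(b+1)/2)) := by
    generalize e1 : (2*a+1)^2 = sa at t1 ⊢
    generalize e2 : (2*b+1)^2 = sb at t2
    generalize e3 : (2*c+1)^2 = sc at t3 ⊢
    generalize e4 : a*(a+1)/2 = ta at t1 h
    generalize e5 : b*(b+1)/2 = tb at t2 h ⊢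
    generalize e6 : c*(c+1)/2 = tc at t3 h
    omega
  have hs := f_spec a c _ hm
  have t4 := tri8 (f1 a c)
  have t5 := tri8 (f2 a c)
  generalize e1 : (2*(f1 a c)+1)^2 = s4 at t4 hs
  generalize e2 : (2*(f2 a c)+1)^2 = s5 at t5 hs
  generalize e3 : (f1 a c)*((f1 a c)+1)/2 = u4 at t4 ⊢
  generalize e4 : (f2 a c)*((f2 a c)+1)/2 = u5 at t5 ⊢
  generalize e5 : b*(b+1)/2 = tb at hs ⊢
  omega

lemma fg_mem (n x y z : ℕ)
    (h : 1 * (x * (x + 1) / 2) + 6 * (y * (y + 1) / 2) + 7 * (z * (z + 1) / 2) = 2 * n + 1) :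
    f1 (g1 x z) (g2 x z) = x ∧ f2 (g1 x z) (g2 x z) = z := by
  have t1 := tri8 x
  have t2 := tri8 y
  have t3 := tri8 z
  have hm : (2*x+1)^2 + 7*(2*z+1)^2 = 16*(n + 1 - 3*(y*(y+1)/2)) := by
    generalize e1 : (2*x+1)^2 = sx at t1 ⊢
    generalize e2 : (2*y+1)^2 = sy at t2
    generalize e3 : (2*z+1)^2 = sz at t3 ⊢
    generalize e4 : x*(x+1)/2 = tx at t1 h
    generalize e5 : y*(y+1)/2 = ty at t2 h ⊢
    generalize e6 : z*(z+1)/2 = tz at t3 h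
    omega
  obtain ⟨p1, p2⟩ := norm_parity x z _ hm
  exact fg x z p1 p2

end Stmt18Aux

open Stmt18Aux in
theorem stmt_18 (n : ℕ) :
    T 1 6 7 (2 * n + 1) = T 1 3 7 n := by
  unfold T
  exact Nat.card_congr
    { toFun := fun q => ⟨(g1 q.1.1 q.1.2.2, q.1.2.1, g2 q.1.1 q.1.2.2),
        fwd_mem n q.1.1 q.1.2.1 q.1.2.2 q.2⟩
      invFun := fun q => ⟨(f1 q.1.1 q.1.2.2, q.1.2.1, f2 q.1.1 q.1.2.2),
        bwd_mem n q.1.1 q.1.2.1 q.1.2.2 q.2⟩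
      left_inv := fun q => by
        obtain ⟨⟨x, y, z⟩, hq⟩ := q
        have h := fg_mem n x y z hq
        refine Subtype.ext ?_
        show (f1 (g1 x z) (g2 x z), y, f2 (g1 x z) (g2 x z)) = (x, y, z)
        rw [h.1, h.2]
      right_inv := fun q => by
        obtain ⟨⟨a, b, c⟩, hq⟩ := q
        have h := gf a c
        refine Subtype.ext ?_
        show (g1 (f1 a c) (f2 a c), b, g2 (f1 a c) (f2 a c)) = (a, b, c)
        rw [h.1, h.2] }
end

section
/- For every nonnegative integer n, T(2,3,5;2n+1) equals the number of triples (x,y,z) ∈ ℕ³ with x(x+1)/2 + y(y+1)/2 + 15·z(z+1)/2 = n − 1 (interpreted as 0 when n = 0). Equivalently, T(2,3,5;2n+1) = T(1,1,15;n−1) for n ≥ 1 and T(2,3,5;1) = 0. -/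
/-! Auxiliary machinery for the bijection. -/

private lemma t8 (k : ℕ) : 8 * ((k*(k+1)/2 : ℕ) : ℤ) = (2*k+1)^2 - 1 := by
  have h : 2*(k*(k+1)/2) = k*(k+1) := Nat.two_mul_div_two_of_even (Nat.even_mul_succ_self k)
  have h2 : 2*((k*(k+1)/2 : ℕ):ℤ) = (k:ℤ)*(k+1) := by exact_mod_cast congrArg (Nat.cast (R := ℤ)) h
  linear_combination 4*h2

private lemma tpar (k : ℕ) : ((k*(k+1)/2) % 2 = 1 ∧ (k%4 = 1 ∨ k%4 = 2)) ∨
    ((k*(k+1)/2) % 2 = 0 ∧ (k%4 = 0 ∨ k%4 = 3)) := by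
  have h : 2*(k*(k+1)/2) = k*(k+1) := Nat.two_mul_div_two_of_even (Nat.even_mul_succ_self k)
  have hq : k = 4*(k/4) + k%4 := (Nat.div_add_mod k 4).symm
  have hr : k % 4 = 0 ∨ k % 4 = 1 ∨ k % 4 = 2 ∨ k % 4 = 3 := by omega
  have e : k*(k+1) = 16*((k/4)*(k/4)) + (8*(k%4)+4)*(k/4) + (k%4)*(k%4+1) := by
    nth_rewrite 1 2 [hq]; ring
  generalize (k/4)*(k/4) = Q at e
  rcases hr with h0|h0|h0|h0 <;> rw [h0] at e <;> omega

/-- Forward map. -/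
private def Fm (p : ℕ × ℕ × ℕ) : ℕ × ℕ × ℕ :=
  if (p.2.1 + p.2.2) % 2 = 1 then
    (p.1, ((5 * (p.2.2:ℤ) + 1 - 3 * (p.2.1:ℤ)).natAbs - 2) / 4, (p.2.1 + p.2.2 - 1) / 4)
  else
    (p.1, (3 * p.2.1 + 5 * p.2.2 + 2) / 4, (((p.2.1:ℤ) - (p.2.2:ℤ)).natAbs - 2) / 4)

/-- Backward map. -/
private def Gm (p : ℕ × ℕ × ℕ) : ℕ × ℕ × ℕ :=
  if (p.2.1 + p.2.2) % 2 = 1 then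
    (p.1, ((5 * (p.2.2:ℤ) + 2 - (p.2.1:ℤ)).natAbs - 1) / 2, (p.2.1 + 3 * p.2.2 + 1) / 2)
  else
    (p.1, (p.2.1 + 5 * p.2.2 + 2) / 2, (((p.2.1:ℤ) - 3 * (p.2.2:ℤ) - 1).natAbs - 1) / 2)

private lemma FS (n x y z : ℕ)
    (h : 2*(x*(x+1)/2) + 3*(y*(y+1)/2) + 5*(z*(z+1)/2) = 2*n+1) :
    (((Fm (x,y,z)).1 * ((Fm (x,y,z)).1 + 1) / 2 : ℕ) : ℤ)
      + (((Fm (x,y,z)).2.1 * ((Fm (x,y,z)).2.1 + 1) / 2 : ℕ) : ℤ)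
      + 15 * (((Fm (x,y,z)).2.2 * ((Fm (x,y,z)).2.2 + 1) / 2 : ℕ) : ℤ) = (n:ℤ) - 1 := by
  have hy := tpar y; have hz := tpar z
  have H8 : 2*(2*(x:ℤ)+1)^2 + 3*(2*(y:ℤ)+1)^2 + 5*(2*(z:ℤ)+1)^2 = 16*(n:ℤ)+18 := by
    have h' : ((2*(x*(x+1)/2) + 3*(y*(y+1)/2) + 5*(z*(z+1)/2) : ℕ) : ℤ) = ((2*n+1 : ℕ) : ℤ) := by
      exact_mod_cast congrArg (Nat.cast (R := ℤ)) h
    simp only [Nat.cast_add, Nat.cast_mul, Nat.cast_ofNat, Nat.cast_one] at h'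
    linear_combination 8*h' - 2*(t8 x) - 3*(t8 y) - 5*(t8 z)
  simp only [Fm]
  split_ifs with hc <;> dsimp only
  · -- case A : y+z odd
    set a : ℕ := ((5 * (z:ℤ) + 1 - 3 * (y:ℤ)).natAbs - 2) / 4 with ha
    set b : ℕ := (y + z - 1) / 4 with hb
    have hyz4 : (y+z) % 4 = 1 := by omega
    have hL1 : (4*(a:ℤ) + 2 = 5*(z:ℤ)+1-3*(y:ℤ)) ∨ (4*(a:ℤ) + 2 = 3*(y:ℤ)-5*(z:ℤ)-1) := by omega
    have hL2 : 4*((b:ℕ):ℤ) + 1 = (y:ℤ) + (z:ℤ) := by omega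
    have hsq : (4*(a:ℤ)+2)^2 = (5*(z:ℤ)+1-3*(y:ℤ))^2 := by
      rcases hL1 with h'|h' <;> rw [h'] <;> ring
    have G16 : 16*((2*(x:ℤ)+1)^2 + (2*(a:ℤ)+1)^2 + 15*(2*(b:ℤ)+1)^2) = 16*(8*(n:ℤ)+9) := by
      linear_combination 8*H8 + 4*hsq + 30*(8*(b:ℤ)+2*(y:ℤ)+2*(z:ℤ)+6)*hL2
    linarith [G16, t8 x, t8 a, t8 b]
  · -- case B : y+z even
    set a : ℕ := (3*y + 5*z + 2) / 4 with ha
    set b : ℕ := (((y:ℤ) - (z:ℤ)).natAbs - 2) / 4 with hb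
    have hL1 : 4*((a:ℕ):ℤ) = 3*(y:ℤ) + 5*(z:ℤ) + 2 := by omega
    have hL2 : (4*(b:ℤ)+2 = (y:ℤ)-(z:ℤ)) ∨ (4*(b:ℤ)+2 = (z:ℤ)-(y:ℤ)) := by omega
    have hsq : (4*(b:ℤ)+2)^2 = ((y:ℤ)-(z:ℤ))^2 := by
      rcases hL2 with h'|h' <;> rw [h'] <;> ring
    have G16 : 16*((2*(x:ℤ)+1)^2 + (2*(a:ℤ)+1)^2 + 15*(2*(b:ℤ)+1)^2) = 16*(8*(n:ℤ)+9) := by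
      linear_combination 8*H8 + 60*hsq + 2*(8*(a:ℤ)+6*(y:ℤ)+10*(z:ℤ)+12)*hL1
    linarith [G16, t8 x, t8 a, t8 b]

private lemma GS (n u v w : ℕ)
    (hq : ((u*(u+1)/2 : ℕ):ℤ) + ((v*(v+1)/2 : ℕ):ℤ) + 15*((w*(w+1)/2 : ℕ):ℤ) = (n:ℤ) - 1) :
    2*((Gm (u,v,w)).1 * ((Gm (u,v,w)).1 + 1) / 2)
      + 3*((Gm (u,v,w)).2.1 * ((Gm (u,v,w)).2.1 + 1) / 2)
      + 5*((Gm (u,v,w)).2.2 * ((Gm (u,v,w)).2.2 + 1) / 2) = 2*n+1 := by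
  have H8 : (2*(u:ℤ)+1)^2 + (2*(v:ℤ)+1)^2 + 15*(2*(w:ℤ)+1)^2 = 8*(n:ℤ)+9 := by
    linear_combination 8*hq - t8 u - t8 v - 15*(t8 w)
  simp only [Gm]
  split_ifs with hc <;> dsimp only
  · -- case A' : v+w odd
    set a : ℕ := ((5 * (w:ℤ) + 2 - (v:ℤ)).natAbs - 1) / 2 with ha
    set b : ℕ := (v + 3*w + 1) / 2 with hb
    have hL1 : (2*(a:ℤ)+1 = 5*(w:ℤ)+2-(v:ℤ)) ∨ (2*(a:ℤ)+1 = (v:ℤ)-5*(w:ℤ)-2) := by omega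
    have hL2 : 2*((b:ℕ):ℤ)+1 = (v:ℤ)+3*(w:ℤ)+2 := by omega
    have hsq : (2*(a:ℤ)+1)^2 = (5*(w:ℤ)+2-(v:ℤ))^2 := by
      rcases hL1 with h'|h' <;> rw [h'] <;> ring
    have G4 : 4*(2*(2*(u:ℤ)+1)^2 + 3*(2*(a:ℤ)+1)^2 + 5*(2*(b:ℤ)+1)^2) = 4*(16*(n:ℤ)+18) := by
      linear_combination 8*H8 + 12*hsq + 20*(2*(b:ℤ)+(v:ℤ)+3*(w:ℤ)+3)*hL2
    have hfin : ((2*(u*(u+1)/2) + 3*(a*(a+1)/2) + 5*(b*(b+1)/2) : ℕ):ℤ) = ((2*n+1 : ℕ):ℤ) := by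
      simp only [Nat.cast_add, Nat.cast_mul, Nat.cast_ofNat, Nat.cast_one]
      linarith [G4, t8 u, t8 a, t8 b]
    exact_mod_cast hfin
  · -- case B' : v+w even
    set a : ℕ := (v + 5*w + 2) / 2 with ha
    set b : ℕ := (((v:ℤ) - 3*(w:ℤ) - 1).natAbs - 1) / 2 with hb
    have hL1 : 2*((a:ℕ):ℤ)+1 = (v:ℤ)+5*(w:ℤ)+3 := by omega
    have hL2 : (2*(b:ℤ)+1 = (v:ℤ)-3*(w:ℤ)-1) ∨ (2*(b:ℤ)+1 = 3*(w:ℤ)+1-(v:ℤ)) := by omega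
    have hsq : (2*(b:ℤ)+1)^2 = ((v:ℤ)-3*(w:ℤ)-1)^2 := by
      rcases hL2 with h'|h' <;> rw [h'] <;> ring
    have G4 : 4*(2*(2*(u:ℤ)+1)^2 + 3*(2*(a:ℤ)+1)^2 + 5*(2*(b:ℤ)+1)^2) = 4*(16*(n:ℤ)+18) := by
      linear_combination 8*H8 + 20*hsq + 12*(2*(a:ℤ)+(v:ℤ)+5*(w:ℤ)+4)*hL1
    have hfin : ((2*(u*(u+1)/2) + 3*(a*(a+1)/2) + 5*(b*(b+1)/2) : ℕ):ℤ) = ((2*n+1 : ℕ):ℤ) := by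
      simp only [Nat.cast_add, Nat.cast_mul, Nat.cast_ofNat, Nat.cast_one]
      linarith [G4, t8 u, t8 a, t8 b]
    exact_mod_cast hfin

private lemma GF (n x y z : ℕ)
    (h : 2*(x*(x+1)/2) + 3*(y*(y+1)/2) + 5*(z*(z+1)/2) = 2*n+1) :
    Gm (Fm (x,y,z)) = (x,y,z) := by
  have hy := tpar y; have hz := tpar z
  simp only [Fm]
  split_ifs with hc <;> simp only [Gm] <;>
    split_ifs with hc2 <;> simp only [Prod.mk.injEq, true_and] <;> omega

private lemma FG (p : ℕ × ℕ × ℕ) : Fm (Gm p) = p := by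
  obtain ⟨u, v, w⟩ := p
  simp only [Gm]
  split_ifs with hc <;> simp only [Fm] <;>
    split_ifs with hc2 <;> simp only [Prod.mk.injEq, true_and] <;> omega

private def eqv (n : ℕ) :
    {p : ℕ × ℕ × ℕ //
      2 * (p.1 * (p.1 + 1) / 2) + 3 * (p.2.1 * (p.2.1 + 1) / 2)
        + 5 * (p.2.2 * (p.2.2 + 1) / 2) = 2 * n + 1} ≃
    {p : ℕ × ℕ × ℕ //
      ((p.1 * (p.1 + 1) / 2 : ℕ) : ℤ) + ((p.2.1 * (p.2.1 + 1) / 2 : ℕ) : ℤ)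
        + 15 * ((p.2.2 * (p.2.2 + 1) / 2 : ℕ) : ℤ) = (n : ℤ) - 1} where
  toFun p := ⟨Fm p.1, by
    obtain ⟨⟨x, y, z⟩, hp⟩ := p
    exact FS n x y z hp⟩
  invFun q := ⟨Gm q.1, by
    obtain ⟨⟨u, v, w⟩, hq⟩ := q
    exact GS n u v w hq⟩
  left_inv p := Subtype.ext (by
    obtain ⟨⟨x, y, z⟩, hp⟩ := p
    exact GF n x y z hp)
  right_inv q := Subtype.ext (FG q.1)

theorem stmt_19 (n : ℕ) :
    T 2 3 5 (2 * n + 1) =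
      Nat.card {p : ℕ × ℕ × ℕ //
        ((p.1 * (p.1 + 1) / 2 : ℕ) : ℤ) + ((p.2.1 * (p.2.1 + 1) / 2 : ℕ) : ℤ)
          + 15 * ((p.2.2 * (p.2.2 + 1) / 2 : ℕ) : ℤ) = (n : ℤ) - 1} := by
  unfold T
  exact Nat.card_congr (eqv n)
end
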